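/- Consider a linear cascade of N single-pole stages: let d : Fin N → ℝ with the d_i positive and pairwise distinct, and gains f : Fin (N-1) → ℝ. Let A be the N×N real matrix with diagonal entries −d_i, subdiagonal entries f_i, zeros elsewhere; B = e₁, C = e_Nᵀ. Then the steady-state output variance equals the closed form ∫₀^∞ (C e^{As} B)² ds = (∏_{u} f_u)² · Σ_{k=1}^{N} Σ_{m=1}^{N} 1 / ( (d_k + d_m) · ∏_{a ≠ k} (d_k − d_a) · ∏_{b ≠ m} (d_m − d_b) ). -/

import Mathlib

open MeasureTheory Matrix Finset

/-- The `N × N` dynamics matrix of a linear cascade: diagonal entries `-d i`,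
subdiagonal entries `A (i+1) i = f i`, zeros elsewhere. -/
noncomputable def cascadeMatrix (N : ℕ) (d : Fin N → ℝ) (f : Fin (N - 1) → ℝ) :
    Matrix (Fin N) (Fin N) ℝ := fun i j =>
  if i = j then -d i
  else if h : (i : ℕ) = (j : ℕ) + 1 then
    f ⟨j, by have hi := i.isLt; have hj := j.isLt; omega⟩
  else 0

/-!
The first column of `exp (s • A)` solves `x' = A x`, `x 0 = e₀`, and this solution is explicit.
Write `E_S(s) = ∑_{k ∈ S} e^{μ_k s} / ∏_{a ∈ S, a ≠ k} (μ_k - μ_a)` for the divided difference of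
`λ ↦ e^{λ s}` at the nodes `μ_k = -d_k`, `k ∈ S`. Divided differences satisfy
`E'_{S ∪ {i}} = μ_i E_{S ∪ {i}} + E_S`, which is exactly the cascade recursion
`x_i' = -d_i x_i + f_{i-1} x_{i-1}`, and `E_S(0) = 0` once `|S| ≥ 2`. Hence
`x_i = (f_0 ⋯ f_{i-1}) E_{[0, i]}` and the output is `∏ f · ∑_k c_k e^{-d_k s}`. Squaring and
integrating termwise gives `∑ c_k c_m / (d_k + d_m)`; the signs `(-1)^(N-1)` hidden in `c_k` and
`c_m` cancel.
-/

theorem Matrix.eq_exp_smul_mulVec_of_hasDerivAt {n : Type*} [Fintype n] [DecidableEq n]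
    (A : Matrix n n ℝ) {x : ℝ → n → ℝ} (hx : ∀ t, HasDerivAt x (A *ᵥ x t) t) (t : ℝ) :
    x t = NormedSpace.exp (t • A) *ᵥ x 0 := by
  -- any matrix norm will do: it is only needed to differentiate `exp`
  let := Matrix.linftyOpNormedRing (n := n) (α := ℝ)
  let := Matrix.linftyOpNormedAlgebra (n := n) (R := ℝ) (α := ℝ)
  let L : (n → ℝ) →L[ℝ] n → ℝ := LinearMap.toContinuousLinearMap A.mulVecLin
  let P : Matrix n n ℝ →L[ℝ] n → ℝ :=
    LinearMap.toContinuousLinearMap ((LinearMap.applyₗ (x 0)).comp Matrix.toLin'.toLinearMap)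
  have hexp : ∀ t, HasDerivAt (fun t : ℝ => NormedSpace.exp (t • A) *ᵥ x 0)
      (L (NormedSpace.exp (t • A) *ᵥ x 0)) t := fun t => by
    have h := P.hasFDerivAt.comp_hasDerivAt t (hasDerivAt_exp_smul_const' (𝕂 := ℝ) A t)
    exact h.congr_deriv (mulVec_mulVec _ _ _).symm
  have := ODE_solution_unique_univ (v := fun _ => L) (s := fun _ => Set.univ) (t₀ := 0)
    (fun _ => L.lipschitz.lipschitzOnWith) (fun t => ⟨hx t, trivial⟩)
    (fun t => ⟨hexp t, trivial⟩) (by simp)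
  exact congrFun this t

section DividedDifference

variable {ι : Type*}

theorem integral_sq_sum_mul_exp_mul_Ioi (s : Finset ι) (c μ : ι → ℝ) (hμ : ∀ k ∈ s, μ k < 0) :
    ∫ t in Set.Ioi 0, (∑ k ∈ s, c k * Real.exp (μ k * t)) ^ 2
      = ∑ k ∈ s, ∑ m ∈ s, c k * c m / -(μ k + μ m) := by
  have hμμ : ∀ k ∈ s, ∀ m ∈ s, μ k + μ m < 0 := fun k hk m hm => by
    linarith [hμ k hk, hμ m hm]
  have hint : ∀ k ∈ s, ∀ m ∈ s, IntegrableOn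
      (fun t => c k * c m * Real.exp ((μ k + μ m) * t)) (Set.Ioi 0) := fun k hk m hm =>
    (integrableOn_exp_mul_Ioi (hμμ k hk m hm) 0).const_mul _
  calc ∫ t in Set.Ioi 0, (∑ k ∈ s, c k * Real.exp (μ k * t)) ^ 2
      = ∫ t in Set.Ioi 0, ∑ k ∈ s, ∑ m ∈ s, c k * c m * Real.exp ((μ k + μ m) * t) := by
        refine setIntegral_congr_fun measurableSet_Ioi fun t _ => ?_
        simp only [sq, sum_mul_sum, add_mul, Real.exp_add]
        exact sum_congr rfl fun k _ => sum_congr rfl fun m _ => by ring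
    _ = ∑ k ∈ s, ∑ m ∈ s, c k * c m * ∫ t in Set.Ioi 0, Real.exp ((μ k + μ m) * t) := by
        rw [integral_finsetSum _ fun k hk => integrable_finsetSum _ (hint k hk)]
        refine sum_congr rfl fun k hk => ?_
        rw [integral_finsetSum _ (hint k hk)]
        simp only [integral_const_mul]
    _ = ∑ k ∈ s, ∑ m ∈ s, c k * c m / -(μ k + μ m) := by
        refine sum_congr rfl fun k hk => sum_congr rfl fun m hm => ?_
        rw [integral_exp_mul_Ioi (hμμ k hk m hm), mul_zero, Real.exp_zero, div_neg, neg_div,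
          mul_neg, mul_one_div]

variable [DecidableEq ι]

theorem sum_prod_erase_sub_inv_eq_zero {K : Type*} [Field K] {s : Finset ι} {v : ι → K}
    (hvs : Set.InjOn v s) (hs : 2 ≤ #s) :
    ∑ k ∈ s, ∏ a ∈ s.erase k, (v k - v a)⁻¹ = 0 := by
  -- compare the coefficients of `X ^ (#s - 1)` in `∑ k ∈ s, Lagrange.basis s v k = 1`
  have hleading : ∀ k ∈ s, (Lagrange.basis s v k).coeff (#s - 1)
      = ∏ a ∈ s.erase k, (v k - v a)⁻¹ := by
    intro k hk
    have hbasis : Lagrange.basis s v k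
        = Polynomial.C (∏ a ∈ s.erase k, (v k - v a)⁻¹) * Lagrange.nodal (s.erase k) v := by
      simp only [Lagrange.basis, Lagrange.basisDivisor, Lagrange.nodal, prod_mul_distrib,
        map_prod]
    have hdeg : (Lagrange.nodal (s.erase k) v).natDegree = #s - 1 := by
      rw [Lagrange.natDegree_nodal, card_erase_of_mem hk]
    rw [hbasis, Polynomial.coeff_C_mul, ← hdeg, Lagrange.nodal_monic.coeff_natDegree, mul_one]
  have := congrArg (Polynomial.coeff · (#s - 1))
    (Lagrange.sum_basis hvs (card_pos.mp (by omega)))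
  simp only [Polynomial.finsetSum_coeff, Polynomial.coeff_one] at this
  rwa [sum_congr rfl hleading, if_neg (by omega)] at this

theorem prod_erase_neg_sub_neg_inv {K : Type*} [Field K] {s : Finset ι} {k : ι} (hk : k ∈ s)
    (v : ι → K) :
    ∏ a ∈ s.erase k, (-v k - -v a)⁻¹ = (-1) ^ (#s - 1) * (∏ a ∈ s.erase k, (v k - v a))⁻¹ := by
  rw [prod_congr rfl fun a _ => by rw [neg_sub_neg, ← neg_sub, inv_neg], prod_neg,
    card_erase_of_mem hk, prod_inv_distrib]

noncomputable def expDivDiff (μ : ι → ℝ) (s : Finset ι) (t : ℝ) : ℝ :=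
  ∑ k ∈ s, (∏ a ∈ s.erase k, (μ k - μ a)⁻¹) * Real.exp (μ k * t)

variable (μ : ι → ℝ)

@[simp]
theorem expDivDiff_empty (t : ℝ) : expDivDiff μ ∅ t = 0 := by
  simp [expDivDiff]

@[simp]
theorem expDivDiff_singleton_zero (i : ι) : expDivDiff μ {i} 0 = 1 := by
  simp [expDivDiff]

theorem expDivDiff_zero {s : Finset ι} (hμ : Set.InjOn μ s) (hs : 2 ≤ #s) :
    expDivDiff μ s 0 = 0 := by
  simpa [expDivDiff] using sum_prod_erase_sub_inv_eq_zero hμ hs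

theorem hasDerivAt_expDivDiff_insert {s : Finset ι} {i : ι} (hi : ∀ k ∈ s, μ k ≠ μ i)
    (t : ℝ) :
    HasDerivAt (expDivDiff μ (insert i s))
      (μ i * expDivDiff μ (insert i s) t + expDivDiff μ s t) t := by
  have his : i ∉ s := fun h => hi i h rfl
  have hderiv : HasDerivAt (expDivDiff μ (insert i s))
      (∑ k ∈ insert i s, (∏ a ∈ (insert i s).erase k, (μ k - μ a)⁻¹) *
        (μ k * Real.exp (μ k * t))) t := by
    refine HasDerivAt.fun_sum fun k _ => HasDerivAt.const_mul _ ?_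
    simpa [mul_comm] using ((hasDerivAt_id t).const_mul (μ k)).exp
  have hweight : ∀ k ∈ s, (μ k - μ i) * ∏ a ∈ (insert i s).erase k, (μ k - μ a)⁻¹
      = ∏ a ∈ s.erase k, (μ k - μ a)⁻¹ := fun k hk => by
    rw [erase_insert_of_ne (ne_of_mem_of_not_mem hk his).symm, prod_insert (by simp [his]),
      ← mul_assoc, mul_inv_cancel₀ (sub_ne_zero.mpr (hi k hk)), one_mul]
  refine hderiv.congr_deriv ?_
  rw [expDivDiff, expDivDiff, mul_sum, ← sub_eq_iff_eq_add', ← sum_sub_distrib,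
    sum_insert_of_eq_zero_if_notMem fun _ => by ring]
  refine sum_congr rfl fun k hk => ?_
  rw [← hweight k hk]
  ring

end DividedDifference

section Cascade

variable {N : ℕ} (d : Fin N → ℝ) (f : Fin (N - 1) → ℝ)

noncomputable def cascadeGain (i : Fin N) : ℝ :=
  ∏ u : Fin (N - 1) with u.val < i.val, f u

noncomputable def cascadeImpulse (t : ℝ) (i : Fin N) : ℝ :=
  cascadeGain f i * expDivDiff (fun k => -d k) (Iic i) t

theorem cascadeGain_zero (hN : 0 < N) : cascadeGain f ⟨0, hN⟩ = 1 :=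
  prod_eq_one fun _ hu => absurd (mem_filter.1 hu).2 (Nat.not_lt_zero _)

theorem cascadeGain_succ {p : ℕ} (hp : p + 1 < N) :
    cascadeGain f ⟨p + 1, hp⟩ = f ⟨p, by omega⟩ * cascadeGain f ⟨p, by omega⟩ := by
  rw [cascadeGain, cascadeGain, ← prod_insert (by simp)]
  congr 1
  ext u
  simp only [mem_filter, mem_univ, true_and, mem_insert, Fin.ext_iff]
  omega

theorem cascadeGain_last (hN : 0 < N) :
    cascadeGain f ⟨N - 1, Nat.sub_lt hN one_pos⟩ = ∏ u, f u := by
  rw [cascadeGain, filter_true_of_mem fun u _ => u.isLt]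

theorem cascadeMatrix_mulVec_cascadeImpulse (t : ℝ) (i : Fin N) :
    (cascadeMatrix N d f *ᵥ cascadeImpulse d f t) i
      = -d i * cascadeImpulse d f t i + cascadeGain f i * expDivDiff (fun k => -d k) (Iio i) t := by
  obtain ⟨_ | p, hi⟩ := i
  · have hIio : Iio (⟨0, hi⟩ : Fin N) = ∅ := by ext; simp [Fin.lt_def]
    rw [mulVec, dotProduct, Fintype.sum_eq_single ⟨0, hi⟩ fun j hj => ?_, hIio]
    · simp [cascadeMatrix]
    · simp [cascadeMatrix, Ne.symm hj]
  · have hIio : Iio (⟨p + 1, hi⟩ : Fin N) = Iic ⟨p, by omega⟩ := by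
      ext; simp [Fin.lt_def, Fin.le_def]
    rw [mulVec, dotProduct,
      Fintype.sum_eq_add ⟨p + 1, hi⟩ ⟨p, by omega⟩ (by simp [Fin.ext_iff]) fun j hj => ?_, hIio,
      cascadeGain_succ, cascadeImpulse, cascadeImpulse]
    · simp only [cascadeMatrix, ↓reduceIte, ↓reduceDIte, Fin.mk.injEq, Nat.add_eq_left,
        one_ne_zero]
      ring
    · simp only [cascadeMatrix, ne_eq, Fin.ext_iff] at hj ⊢
      rw [if_neg (by omega), dif_neg (by omega), zero_mul]

theorem hasDerivAt_cascadeImpulse (hd : Function.Injective d) (t : ℝ) :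
    HasDerivAt (cascadeImpulse d f) (cascadeMatrix N d f *ᵥ cascadeImpulse d f t) t := by
  refine hasDerivAt_pi.2 fun i => ?_
  have hμ : ∀ k ∈ Iio i, -d k ≠ -d i := fun k hk => by
    simpa using hd.ne (mem_Iio.1 hk).ne
  have h := (hasDerivAt_expDivDiff_insert (fun k => -d k) hμ t).const_mul (cascadeGain f i)
  rw [Iio_insert] at h
  exact h.congr_deriv (by rw [cascadeMatrix_mulVec_cascadeImpulse, cascadeImpulse]; ring)

theorem cascadeImpulse_zero (hN : 0 < N) (hd : Function.Injective d) :
    cascadeImpulse d f 0 = Pi.single ⟨0, hN⟩ 1 := by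
  ext ⟨_ | p, hi⟩
  · have hIic : Iic (⟨0, hi⟩ : Fin N) = {⟨0, hi⟩} := by ext; simp [Fin.le_def, Fin.ext_iff]
    simp [cascadeImpulse, hIic, cascadeGain_zero]
  · rw [cascadeImpulse, expDivDiff_zero _ (fun a _ b _ h => hd (neg_inj.1 h)) (by simp),
      mul_zero, Pi.single_eq_of_ne (by simp [Fin.ext_iff])]

theorem cascadeImpulse_last (hN : 0 < N) (t : ℝ) :
    cascadeImpulse d f t ⟨N - 1, Nat.sub_lt hN one_pos⟩
      = (∏ u, f u) * expDivDiff (fun k => -d k) univ t := by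
  have hIic : Iic (⟨N - 1, Nat.sub_lt hN one_pos⟩ : Fin N) = univ := by
    ext; simp only [mem_Iic, Fin.le_def, mem_univ, iff_true]; omega
  rw [cascadeImpulse, cascadeGain_last f hN, hIic]

theorem exp_smul_cascadeMatrix_apply_zero (hN : 0 < N) (hd : Function.Injective d) (t : ℝ)
    (i : Fin N) :
    NormedSpace.exp (t • cascadeMatrix N d f) i ⟨0, hN⟩ = cascadeImpulse d f t i := by
  rw [eq_exp_smul_mulVec_of_hasDerivAt _ (hasDerivAt_cascadeImpulse d f hd) t,
    cascadeImpulse_zero d f hN hd, mulVec_single_one, col_apply]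

end Cascade

/-- Closed form for the steady-state output variance of a linear cascade with pairwise
distinct positive rates `d` and gains `f`:
`∫₀^∞ (C e^{As} B)² ds = (∏ f_u)² · Σ_k Σ_m 1/((d_k + d_m) ∏_{a≠k}(d_k − d_a) ∏_{b≠m}(d_m − d_b))`,
where `B = e₁`, `C = e_Nᵀ`. -/
theorem cascade_variance_closed_form (N : ℕ) (hN : 0 < N) (d : Fin N → ℝ)
    (hd : ∀ i, 0 < d i) (hdist : Function.Injective d) (f : Fin (N - 1) → ℝ) :
    (∫ s in Set.Ioi (0 : ℝ),
        ((NormedSpace.exp (s • cascadeMatrix N d f)) ⟨N - 1, by omega⟩ ⟨0, hN⟩) ^ 2)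
      = (∏ u, f u) ^ 2 *
        ∑ k, ∑ m, 1 / ((d k + d m) * (∏ a ∈ univ.erase k, (d k - d a)) *
          (∏ b ∈ univ.erase m, (d m - d b))) := by
  have hμ : ∀ k ∈ univ, -d k < 0 := fun k _ => neg_lt_zero.2 (hd k)
  have hsq : ((-1 : ℝ) ^ (#(univ : Finset (Fin N)) - 1)) ^ 2 = 1 := by
    rw [← pow_mul, pow_mul', neg_one_sq, one_pow]
  simp_rw [exp_smul_cascadeMatrix_apply_zero d f hN hdist, cascadeImpulse_last d f hN, expDivDiff,
    mul_pow]
  rw [integral_const_mul, integral_sq_sum_mul_exp_mul_Ioi _ _ _ hμ]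
  congr 1
  refine sum_congr rfl fun k _ => sum_congr rfl fun m _ => ?_
  rw [prod_erase_neg_sub_neg_inv (mem_univ k), prod_erase_neg_sub_neg_inv (mem_univ m), one_div,
    mul_inv, mul_inv]
  linear_combination ((∏ a ∈ univ.erase k, (d k - d a))⁻¹ * (∏ b ∈ univ.erase m, (d m - d b))⁻¹
    * (d k + d m)⁻¹) * hsq
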